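/- Every non-reflexive real Banach space contains, for every ε > 0, an infinite sequence (b_j) with ‖b_j‖ = 1 for all j which is (1+ε)-wide-(s). -/

import Mathlib

open Finset Filter Metric NormedSpace

noncomputable section

universe u

variable {X Y : Type*} [NormedAddCommGroup X] [NormedSpace ℝ X]
  [NormedAddCommGroup Y] [NormedSpace ℝ Y]

/-- `b` is a `lam`-basic sequence: for all scalars `c` and all `k ≤ n`,
`‖∑_{j<k} c_j b_j‖ ≤ lam * ‖∑_{j<n} c_j b_j‖`. -/
def IsBasicWith (lam : ℝ) (b : ℕ → X) : Prop :=
  ∀ (c : ℕ → ℝ) (k n : ℕ), k ≤ n →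
    ‖∑ j ∈ Finset.range k, c j • b j‖ ≤ lam * ‖∑ j ∈ Finset.range n, c j • b j‖

/-- `b` is a `lam`-wide-(s) sequence: it is `2lam`-basic, `‖b j‖ ≤ lam` for all `j`,
and `|∑_{k≤j<n} c_j| ≤ lam * ‖∑_{j<n} c_j b_j‖` for all scalars and `k ≤ n`. -/
def IsWideSWith (lam : ℝ) (b : ℕ → X) : Prop :=
  IsBasicWith (2 * lam) b ∧ (∀ j, ‖b j‖ ≤ lam) ∧
    ∀ (c : ℕ → ℝ) (k n : ℕ), k ≤ n →
      |∑ j ∈ Finset.Ico k n, c j| ≤ lam * ‖∑ j ∈ Finset.range n, c j • b j‖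

set_option maxHeartbeats 1000000 in
lemma my_helly {Z : Type*} [NormedAddCommGroup Z] [NormedSpace ℝ Z]
    {ι : Type*} [Fintype ι] (g : ι → Z →L[ℝ] ℝ) (c : ι → ℝ) (M ε : ℝ)
    (hM : 0 ≤ M) (hε : 0 < ε)
    (h : ∀ a : ι → ℝ, |∑ i, a i * c i| ≤ M * ‖∑ i, a i • g i‖) :
    ∃ z : Z, ‖z‖ ≤ M + ε ∧ ∀ i, g i z = c i := by
  classical
  -- Step 1: the constraints are consistent
  have hz₀ : ∃ z₀ : Z, ∀ i, g i z₀ = c i := by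
    by_contra hc
    push_neg at hc
    set T : Z →ₗ[ℝ] (ι → ℝ) := LinearMap.pi (fun i => (g i : Z →ₗ[ℝ] ℝ)) with hT
    have hcr : c ∉ LinearMap.range T := by
      rintro ⟨z, rfl⟩
      obtain ⟨i, hi⟩ := hc z
      exact hi rfl
    have hclosed : IsClosed ((LinearMap.range T : Submodule ℝ (ι → ℝ)) : Set (ι → ℝ)) :=
      Submodule.closed_of_finiteDimensional _
    obtain ⟨φ, u, hφs, hu⟩ :=
      geometric_hahn_banach_closed_point (Submodule.convex _) hclosed hcr
    have hu0 : 0 < u := by simpa using hφs 0 (Submodule.zero_mem _)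
    have hφ0 : ∀ v ∈ LinearMap.range T, φ v = 0 := by
      intro v hv
      by_contra hne
      have h2 : φ (((u + 1) / φ v) • v) < u :=
        hφs _ (Submodule.smul_mem _ _ hv)
      rw [map_smul, smul_eq_mul, div_mul_cancel₀ _ hne] at h2
      linarith
    set a : ι → ℝ := fun i => φ (fun j => if i = j then 1 else 0) with ha
    have hφ : ∀ v : ι → ℝ, φ v = ∑ i, v i * a i := by
      intro v
      conv_lhs => rw [pi_eq_sum_univ v, map_sum]
      refine Finset.sum_congr rfl fun i _ => ?_
      rw [map_smul, smul_eq_mul]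
    have hg0 : (∑ i, a i • g i) = 0 := by
      ext z
      have h3 := hφ0 (T z) ⟨z, rfl⟩
      rw [hφ] at h3
      simpa [hT, LinearMap.pi_apply, mul_comm] using h3
    have h2 := h a
    rw [hg0, norm_zero, mul_zero] at h2
    have h3 : ∑ i, a i * c i = φ c := by rw [hφ]; exact Finset.sum_congr rfl fun i _ => mul_comm _ _
    rw [h3] at h2
    have : 0 < φ c := lt_trans hu0 hu
    rw [abs_of_pos this] at h2
    linarith
  obtain ⟨z₀, hz₀⟩ := hz₀
  by_contra hcon
  push_neg at hcon
  set N : Submodule ℝ Z := ⨅ i, LinearMap.ker (g i : Z →ₗ[ℝ] ℝ) with hN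
  have hNmem : ∀ w ∈ N, ∀ i, g i w = 0 := by
    intro w hw i
    have := (Submodule.mem_iInf _).1 hw i
    exact this
  have hNc : IsClosed (N : Set Z) := by
    have h4 : (N : Set Z) = ⋂ i, ((LinearMap.ker (g i : Z →ₗ[ℝ] ℝ) : Submodule ℝ Z) : Set Z) := by
      rw [hN]; exact Submodule.coe_iInf _
    rw [h4]
    refine isClosed_iInter fun i => ?_
    have : ((LinearMap.ker (g i : Z →ₗ[ℝ] ℝ) : Submodule ℝ Z) : Set Z) = (g i) ⁻¹' {0} := by
      ext z; simp [LinearMap.mem_ker]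
    rw [this]
    exact IsClosed.preimage (g i).continuous isClosed_singleton
  haveI : IsClosed (N : Set Z) := hNc
  -- lower bound for the quotient norm
  have hq : M + ε ≤ ‖(Submodule.Quotient.mk z₀ : Z ⧸ N)‖ := by
    by_contra hq
    push_neg at hq
    obtain ⟨m, hm, hmn⟩ := Submodule.Quotient.norm_mk_lt
      (Submodule.Quotient.mk z₀ : Z ⧸ N)
      (by linarith : (0:ℝ) < M + ε - ‖(Submodule.Quotient.mk z₀ : Z ⧸ N)‖)
    have hmem : m - z₀ ∈ N := (Submodule.Quotient.eq N).1 hm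
    have hmc : ∀ i, g i m = c i := by
      intro i
      have h6 := hNmem _ hmem i
      rw [map_sub] at h6
      have h5 := hz₀ i
      linarith
    obtain ⟨i, hi⟩ := hcon m (by linarith)
    exact hi (hmc i)
  have hne : (Submodule.Quotient.mk z₀ : Z ⧸ N) ≠ 0 := by
    intro h0; rw [h0, norm_zero] at hq; linarith
  obtain ⟨φ, hφ1, hφ2⟩ := exists_dual_vector ℝ (Submodule.Quotient.mk z₀ : Z ⧸ N) (norm_ne_zero_iff.2 hne)
  set mkc : Z →L[ℝ] (Z ⧸ N) :=
    LinearMap.mkContinuous N.mkQ 1 (fun z => by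
      simpa using Submodule.Quotient.norm_mk_le N z) with hmkc
  set ψ : Z →L[ℝ] ℝ := φ.comp mkc with hψdef
  have hψnorm : ‖ψ‖ ≤ 1 := by
    refine le_trans (ContinuousLinearMap.opNorm_comp_le _ _) ?_
    have h1 : ‖mkc‖ ≤ 1 := LinearMap.mkContinuous_norm_le _ zero_le_one _
    calc ‖φ‖ * ‖mkc‖ = ‖mkc‖ := by rw [hφ1, one_mul]
      _ ≤ 1 := h1
  have hψz₀ : ψ z₀ = ‖(Submodule.Quotient.mk z₀ : Z ⧸ N)‖ := by
    have h7 : mkc z₀ = (Submodule.Quotient.mk z₀ : Z ⧸ N) := rfl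
    simp only [hψdef, ContinuousLinearMap.comp_apply, h7]
    rw [hφ2]; rfl
  have hψker : ∀ w ∈ N, ψ w = 0 := by
    intro w hw
    have h8 : mkc w = 0 := (Submodule.Quotient.mk_eq_zero N).2 hw
    simp [hψdef, ContinuousLinearMap.comp_apply, h8]
  -- ψ is in the span of the g i
  have hspan : (ψ : Z →ₗ[ℝ] ℝ) ∈ Submodule.span ℝ (Set.range (fun i => (g i : Z →ₗ[ℝ] ℝ))) := by
    refine mem_span_of_iInf_ker_le_ker ?_
    intro w hw
    have : w ∈ N := by rw [hN]; exact hw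
    exact hψker w this
  obtain ⟨a, haψ⟩ := (Submodule.mem_span_range_iff_exists_fun ℝ).1 hspan
  have hsum : (∑ i, a i • g i) = ψ := by
    ext z
    have := LinearMap.congr_fun haψ z
    simpa using this
  have h3 := h a
  have h4 : ∑ i, a i * c i = ψ z₀ := by
    have : ∑ i, a i * c i = (∑ i, a i • g i) z₀ := by
      rw [ContinuousLinearMap.sum_apply]
      refine Finset.sum_congr rfl fun i _ => ?_
      rw [ContinuousLinearMap.smul_apply, hz₀ i, smul_eq_mul]
    rw [this, hsum]
  rw [h4, hsum] at h3
  have h9 : |ψ z₀| ≤ M := le_trans h3 (by nlinarith [norm_nonneg ψ])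
  have h10 : M + ε ≤ ψ z₀ := by rw [hψz₀]; exact hq
  have := le_abs_self (ψ z₀)
  linarith

lemma my_surj_of_findim [FiniteDimensional ℝ X] :
    Function.Surjective (inclusionInDoubleDual ℝ X) := by
  intro Φ
  let e1 : (X →ₗ[ℝ] ℝ) ≃ₗ[ℝ] (X →L[ℝ] ℝ) := LinearMap.toContinuousLinearMap
  let ψ : Module.Dual ℝ (Module.Dual ℝ X) := Φ.toLinearMap.comp e1.toLinearMap
  refine ⟨(Module.evalEquiv ℝ X).symm ψ, ?_⟩
  ext f
  rw [NormedSpace.dual_def]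
  have h2 : (f : X →ₗ[ℝ] ℝ) ((Module.evalEquiv ℝ X).symm ψ) = ψ (f : X →ₗ[ℝ] ℝ) :=
    Module.apply_evalEquiv_symm_apply ℝ X _ _
  have h3 : ψ (f : X →ₗ[ℝ] ℝ) = Φ (e1 (f : X →ₗ[ℝ] ℝ)) := rfl
  have h4 : e1 (f : X →ₗ[ℝ] ℝ) = f := by
    ext z
    exact congrFun (LinearMap.coe_toContinuousLinearMap' (f : X →ₗ[ℝ] ℝ)) z
  calc f ((Module.evalEquiv ℝ X).symm ψ) = ψ (f : X →ₗ[ℝ] ℝ) := h2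
    _ = Φ f := by rw [h3, h4]

lemma my_ker_vector (h : ¬ Function.Surjective (inclusionInDoubleDual ℝ X))
    (S : Finset (X →L[ℝ] ℝ)) : ∃ v : X, v ≠ 0 ∧ ∀ g ∈ S, g v = 0 := by
  by_contra hc
  push_neg at hc
  have : FiniteDimensional ℝ X := by
    let T : X →ₗ[ℝ] ({g // g ∈ S} → ℝ) := LinearMap.pi fun i => (i.1 : X →ₗ[ℝ] ℝ)
    refine FiniteDimensional.of_injective T ?_
    have hker : LinearMap.ker T = ⊥ := by
      rw [eq_bot_iff]
      intro v hv
      simp only [LinearMap.mem_ker] at hv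
      by_contra hv0
      have hv0' : v ≠ 0 := fun h0 => hv0 (by simp [h0])
      obtain ⟨g, hgS, hg⟩ := hc v hv0'
      have := congrFun hv ⟨g, hgS⟩
      exact hg (by simpa [T] using this)
    exact LinearMap.ker_eq_bot.1 hker
  exact h (my_surj_of_findim)

lemma my_norming_net (S : Finset X) {δ : ℝ} (hδ0 : 0 < δ) :
    ∃ Γ : Finset (X →L[ℝ] ℝ), (∀ g ∈ Γ, ‖g‖ ≤ 1) ∧
      ∀ u ∈ Submodule.span ℝ (S : Set X), ∃ g ∈ Γ, (1 - δ) * ‖u‖ ≤ g u := by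
  classical
  set V : Submodule ℝ X := Submodule.span ℝ (S : Set X) with hV
  haveI : FiniteDimensional ℝ V := FiniteDimensional.span_of_finite ℝ S.finite_toSet
  have hcpt : IsCompact (sphere (0 : V) 1) := isCompact_sphere _ _
  obtain ⟨T, hT⟩ := hcpt.elim_finite_subcover (fun t : V => ball t (δ/2))
    (fun _ => isOpen_ball)
    (fun u hu => Set.mem_iUnion.2 ⟨u, mem_ball_self (by positivity)⟩)
  choose gfun hg1 hg2 using fun t : V => exists_dual_vector'' ℝ ((t : X))
  refine ⟨insert 0 (Finset.image gfun T), ?_, ?_⟩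
  · intro g hg
    rcases Finset.mem_insert.1 hg with h0 | h1
    · simp [h0]
    · obtain ⟨t, _, rfl⟩ := Finset.mem_image.1 h1
      exact hg1 t
  · intro u hu
    by_cases hu0 : u = 0
    · exact ⟨0, Finset.mem_insert_self _ _, by simp [hu0]⟩
    · have hunorm : (0:ℝ) < ‖u‖ := norm_pos_iff.2 hu0
      set uhat : V := ‖u‖⁻¹ • (⟨u, hu⟩ : V) with huhat
      have hcoe : ((⟨u, hu⟩ : V) : X) = u := rfl
      have huhatnorm : ‖uhat‖ = 1 := by
        rw [huhat, norm_smul]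
        have : ‖(⟨u, hu⟩ : V)‖ = ‖u‖ := rfl
        rw [this]
        simp [abs_of_pos (inv_pos.2 hunorm), inv_mul_cancel₀ (ne_of_gt hunorm)]
      have huhats : uhat ∈ sphere (0 : V) 1 := by simp [huhatnorm]
      obtain ⟨t, htT, htb⟩ : ∃ t ∈ T, uhat ∈ ball t (δ/2) := by
        have := hT huhats
        simpa using this
      have hdist : ‖(uhat : X) - (t : X)‖ < δ/2 := by
        have h5 : dist uhat t < δ/2 := mem_ball.1 htb
        rw [dist_eq_norm] at h5
        have : ‖uhat - t‖ = ‖(uhat : X) - (t : X)‖ := rfl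
        linarith [this ▸ h5]
      refine ⟨gfun t, Finset.mem_insert_of_mem (Finset.mem_image_of_mem _ htT), ?_⟩
      -- ‖t‖ ≥ 1 - δ/2
      have htnorm : (1:ℝ) - δ/2 ≤ ‖(t : X)‖ := by
        have h6 : ‖(uhat : X)‖ = 1 := by rw [← huhatnorm]; rfl
        have := norm_sub_norm_le (uhat : X) (t : X)
        linarith
      have h7 : (1:ℝ) - δ ≤ gfun t (uhat : X) := by
        have h8 : gfun t (t : X) = ‖(t : X)‖ := hg2 t
        have h9 : |gfun t ((uhat : X) - (t : X))| ≤ ‖(uhat:X) - (t:X)‖ := by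
          calc |gfun t ((uhat : X) - (t : X))| ≤ ‖gfun t‖ * ‖(uhat:X) - (t:X)‖ :=
                (gfun t).le_opNorm _
            _ ≤ 1 * ‖(uhat:X) - (t:X)‖ := by
                apply mul_le_mul_of_nonneg_right (hg1 t) (norm_nonneg _)
            _ = _ := one_mul _
      -- gfun t uhat = gfun t t + gfun t (uhat - t)
        have h10 : gfun t (uhat : X) = gfun t (t : X) + gfun t ((uhat : X) - (t : X)) := by
          rw [← map_add]; congr 1; abel
        have := neg_abs_le (gfun t ((uhat : X) - (t : X)))
        rw [h10, h8]
        linarith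
      -- scale back
      have hscale : (uhat : X) = ‖u‖⁻¹ • u := by
        rw [huhat]; rfl
      have h11 : gfun t u = ‖u‖ * gfun t (uhat : X) := by
        rw [hscale, map_smul, smul_eq_mul, ← mul_assoc, mul_inv_cancel₀ (ne_of_gt hunorm), one_mul]
      rw [h11]
      calc (1 - δ) * ‖u‖ = ‖u‖ * (1 - δ) := mul_comm _ _
        _ ≤ ‖u‖ * gfun t (uhat : X) := by
            apply mul_le_mul_of_nonneg_left h7 (le_of_lt hunorm)

lemma my_ns {E : Type*} [NormedAddCommGroup E] [NormedSpace ℝ E] (a : ℝ) (F : E →L[ℝ] ℝ) :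
    ‖a • F‖ = ‖a‖ * ‖F‖ := norm_smul _ _

lemma my_ss {E : Type*} [NormedAddCommGroup E] [NormedSpace ℝ E] (a : ℝ) (F G : E →L[ℝ] ℝ) :
    a • (F - G) = a • F - a • G := smul_sub _ _ _

lemma my_negs {E : Type*} [NormedAddCommGroup E] [NormedSpace ℝ E] (a : ℝ) (F : E →L[ℝ] ℝ) :
    (-a) • F = -(a • F) := by ext x; simp

lemma my_ones {E : Type*} [NormedAddCommGroup E] [NormedSpace ℝ E] (F : E →L[ℝ] ℝ) :
    (1 : ℝ) • F = F := one_smul _ _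

lemma my_riesz {E : Type*} [NormedAddCommGroup E] [NormedSpace ℝ E]
    {F : Submodule ℝ (E →L[ℝ] ℝ)} (hFc : IsClosed (F : Set (E →L[ℝ] ℝ)))
    (hF : ∃ x : E →L[ℝ] ℝ, x ∉ F) {r : ℝ} (hr : r < 1) :
    ∃ x₀ : E →L[ℝ] ℝ, x₀ ∉ F ∧ ∀ y ∈ F, r * ‖x₀‖ ≤ ‖x₀ - y‖ :=
  riesz_lemma hFc hF hr

/-- Choice of the functional `f_n`. -/
lemma my_step_f (F : StrongDual ℝ (StrongDual ℝ X)) (θ θ'' : ℝ) (hθ : 0 < θ) (hθθ : θ < θ'')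
    (hdist : ∀ x : X, θ'' ≤ ‖F - inclusionInDoubleDual ℝ X x‖)
    (S : Finset X) :
    ∃ φ : StrongDual ℝ X, ‖φ‖ ≤ 1 ∧ F φ = θ ∧ ∀ z ∈ S, φ z = 0 := by
  classical
  have hθ''pos : 0 < θ'' := lt_trans hθ hθθ
  set g : Option {z // z ∈ S} → StrongDual ℝ (StrongDual ℝ X) :=
    fun i => Option.elim i F (fun z => inclusionInDoubleDual ℝ X z.1) with hg
  set c : Option {z // z ∈ S} → ℝ := fun i => Option.elim i θ (fun _ => 0) with hc
  have key : ∀ a : Option {z // z ∈ S} → ℝ,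
      |∑ i, a i * c i| ≤ (θ/θ'') * ‖∑ i, a i • g i‖ := by
    intro a
    have hsum1 : ∑ i, a i * c i = a none * θ := by
      rw [Fintype.sum_option]
      simp [hc]
    have hsum2 : ∑ i, a i • g i
        = a none • F + ∑ z : {z // z ∈ S}, a (some z) • inclusionInDoubleDual ℝ X z.1 := by
      rw [Fintype.sum_option]
      simp [hg]
    rw [hsum1, hsum2]
    by_cases hb : a none = 0
    · rw [hb]
      simp only [zero_mul, abs_zero]
      positivity
    · set w : X := -(a none)⁻¹ • ∑ z : {z // z ∈ S}, a (some z) • z.1 with hw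
      have hrw : a none • F + ∑ z : {z // z ∈ S}, a (some z) • inclusionInDoubleDual ℝ X z.1
          = a none • (F - inclusionInDoubleDual ℝ X w) := by
        rw [hw, map_smul, map_sum, my_ss, smul_smul]
        simp only [map_smul]
        rw [mul_neg, mul_inv_cancel₀ hb, my_negs, my_ones, sub_neg_eq_add]
      rw [hrw, my_ns]
      have h1 : θ'' ≤ ‖F - inclusionInDoubleDual ℝ X w‖ := hdist w
      rw [abs_mul, abs_of_pos hθ]
      calc |a none| * θ = (θ/θ'') * (|a none| * θ'') := by field_simp
        _ ≤ (θ/θ'') * (|a none| * ‖F - inclusionInDoubleDual ℝ X w‖) := by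
            apply mul_le_mul_of_nonneg_left _ (by positivity)
            exact mul_le_mul_of_nonneg_left h1 (abs_nonneg _)
      -- note ‖a none • _‖ = |a none| * ‖_‖ handled by norm_smul; real smul norm
  obtain ⟨φ, hφnorm, hφval⟩ := my_helly g c (θ/θ'') (1 - θ/θ'')
    (by positivity) (by rw [sub_pos, div_lt_one hθ''pos]; exact hθθ) key
  refine ⟨φ, ?_, ?_, ?_⟩
  · calc ‖φ‖ ≤ θ/θ'' + (1 - θ/θ'') := hφnorm
      _ = 1 := by ring
  · have := hφval none
    simpa [hg, hc] using this
  · intro z hz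
    have := hφval (some ⟨z, hz⟩)
    simpa [hg, hc, NormedSpace.dual_def] using this

/-- Choice of the vector `x_n`. -/
lemma my_step_x [CompleteSpace X] (h : ¬ Function.Surjective (inclusionInDoubleDual ℝ X))
    (F : StrongDual ℝ (StrongDual ℝ X)) (hF : ‖F‖ < 1) (S : Finset (StrongDual ℝ X)) :
    ∃ ξ : X, ‖ξ‖ = 1 ∧ ∀ g ∈ S, g ξ = F g := by
  classical
  set gg : {g // g ∈ S} → StrongDual ℝ X := fun i => i.1 with hgg
  set c : {g // g ∈ S} → ℝ := fun i => F i.1 with hc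
  have key : ∀ a : {g // g ∈ S} → ℝ, |∑ i, a i * c i| ≤ ‖F‖ * ‖∑ i, a i • gg i‖ := by
    intro a
    have h1 : ∑ i, a i * c i = F (∑ i, a i • gg i) := by
      rw [map_sum]
      refine Finset.sum_congr rfl fun i _ => ?_
      rw [map_smul, smul_eq_mul]
    rw [h1]
    exact F.le_opNorm _
  obtain ⟨z₀, hz₀norm, hz₀val⟩ := my_helly gg c ‖F‖ ((1 - ‖F‖)/2)
    (norm_nonneg F) (by linarith) key
  have hz₀lt : ‖z₀‖ < 1 := by
    have := hz₀norm
    linarith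
  obtain ⟨v, hv0, hv⟩ := my_ker_vector h S
  have hvnorm : (0:ℝ) < ‖v‖ := norm_pos_iff.2 hv0
  -- IVT to hit the unit sphere
  set f : ℝ → ℝ := fun t => ‖z₀ + t • v‖ with hf
  have hcont : Continuous f := by
    apply Continuous.norm
    exact continuous_const.add (continuous_id.smul continuous_const)
  set T : ℝ := (1 + ‖z₀‖)/‖v‖ with hT
  have hT0 : 0 ≤ T := by positivity
  have hfT : 1 ≤ f T := by
    have h2 : ‖(T • v : X)‖ ≤ ‖z₀ + T • v‖ + ‖z₀‖ := by
      calc ‖(T • v : X)‖ = ‖(z₀ + T • v) - z₀‖ := by congr 1; abel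
        _ ≤ ‖z₀ + T • v‖ + ‖z₀‖ := norm_sub_le _ _
    have h3 : ‖(T • v : X)‖ = T * ‖v‖ := by
      rw [norm_smul, Real.norm_eq_abs, abs_of_nonneg hT0]
    rw [h3, hT, div_mul_cancel₀ _ (ne_of_gt hvnorm)] at h2
    simp only [hf]
    linarith
  have hf0 : f 0 ≤ 1 := by
    simp only [hf, zero_smul, add_zero]
    linarith
  have h1mem : (1:ℝ) ∈ Set.Icc (f 0) (f T) := ⟨hf0, hfT⟩
  obtain ⟨t, _, ht⟩ := intermediate_value_Icc hT0 (hcont.continuousOn) h1mem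
  refine ⟨z₀ + t • v, ht, ?_⟩
  intro g hg
  rw [map_add, map_smul, hv g hg, smul_eq_mul, mul_zero, add_zero]
  exact hz₀val ⟨g, hg⟩

/-- The invariant carried through the recursive construction. -/
def GoodSeq (F : StrongDual ℝ (StrongDual ℝ X)) (θ δ : ℝ) (n : ℕ)
    (x : ℕ → X) (f : ℕ → StrongDual ℝ X) (G : ℕ → Finset (StrongDual ℝ X)) : Prop :=
  (∀ m, m < n → ‖x m‖ = 1) ∧
  (∀ k, k < n → ‖f k‖ ≤ 1) ∧
  (∀ k, k < n → F (f k) = θ) ∧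
  (∀ k m, k ≤ m → m < n → f k (x m) = θ) ∧
  (∀ k m, m < k → k < n → f k (x m) = 0) ∧
  (∀ k m, k ≤ m → m < n → ∀ g ∈ G k, g (x m) = F g) ∧
  (∀ k, k < n → ∀ g ∈ G k, ‖g‖ ≤ 1) ∧
  (∀ k, k < n → ∀ u ∈ Submodule.span ℝ (x '' Set.Iio k), ∃ g ∈ G k, (1 - δ) * ‖u‖ ≤ g u)

lemma my_step [CompleteSpace X]
    (h : ¬ Function.Surjective (inclusionInDoubleDual ℝ X))
    (F : StrongDual ℝ (StrongDual ℝ X)) (θ θ'' δ : ℝ) (hθ : 0 < θ) (hθθ : θ < θ'')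
    (hF : ‖F‖ < 1) (hδ0 : 0 < δ)
    (hdist : ∀ x : X, θ'' ≤ ‖F - inclusionInDoubleDual ℝ X x‖)
    (n : ℕ) (x : ℕ → X) (f : ℕ → StrongDual ℝ X) (G : ℕ → Finset (StrongDual ℝ X))
    (hGood : GoodSeq F θ δ n x f G) :
    ∃ (x' : ℕ → X) (f' : ℕ → StrongDual ℝ X) (G' : ℕ → Finset (StrongDual ℝ X)),
      (∀ m, m ≠ n → x' m = x m) ∧ (∀ m, m ≠ n → f' m = f m) ∧ (∀ m, m ≠ n → G' m = G m) ∧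
      GoodSeq F θ δ (n+1) x' f' G' := by
  classical
  obtain ⟨g1, g2, g3, g4, g5, g6, g7, g8⟩ := hGood
  obtain ⟨φ, hφ1, hφ2, hφ3⟩ := my_step_f F θ θ'' hθ hθθ hdist (Finset.image x (Finset.range n))
  set f' : ℕ → StrongDual ℝ X := Function.update f n φ with hf'def
  obtain ⟨Γ, hΓ1, hΓ2⟩ := my_norming_net (Finset.image x (Finset.range n)) hδ0
  set G' : ℕ → Finset (StrongDual ℝ X) := Function.update G n Γ with hG'def
  set S : Finset (StrongDual ℝ X) :=
    Finset.image f' (Finset.range (n+1)) ∪ (Finset.range (n+1)).biUnion G' with hSdef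
  obtain ⟨ξ, hξ1, hξ2⟩ := my_step_x h F hF S
  set x' : ℕ → X := Function.update x n ξ with hx'def
  have hx'lt : ∀ m, m < n → x' m = x m := fun m hm =>
    Function.update_of_ne (Nat.ne_of_lt hm) _ _
  have hx'n : x' n = ξ := Function.update_self _ _ _
  have hf'lt : ∀ k, k < n → f' k = f k := fun k hk =>
    Function.update_of_ne (Nat.ne_of_lt hk) _ _
  have hf'n : f' n = φ := Function.update_self _ _ _
  have hG'lt : ∀ k, k < n → G' k = G k := fun k hk =>
    Function.update_of_ne (Nat.ne_of_lt hk) _ _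
  have hG'n : G' n = Γ := Function.update_self _ _ _
  have hF' : ∀ k, k ≤ n → F (f' k) = θ := by
    intro k hk
    rcases lt_or_eq_of_le hk with hk | rfl
    · rw [hf'lt k hk]; exact g3 k hk
    · rw [hf'n]; exact hφ2
  have hfS : ∀ k, k ≤ n → f' k ∈ S := by
    intro k hk
    exact Finset.mem_union_left _
      (Finset.mem_image_of_mem f' (Finset.mem_range.2 (Nat.lt_succ_of_le hk)))
  have hGS : ∀ k, k ≤ n → ∀ g ∈ G' k, g ∈ S := by
    intro k hk g hg
    refine Finset.mem_union_right _ (Finset.mem_biUnion.2 ?_)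
    exact ⟨k, Finset.mem_range.2 (Nat.lt_succ_of_le hk), hg⟩
  have hximg : ∀ z ∈ Finset.image x (Finset.range n), φ z = 0 := hφ3
  have hspan_img : (↑(Finset.image x (Finset.range n)) : Set X) = x '' Set.Iio n := by
    rw [Finset.coe_image, Finset.coe_range]
  refine ⟨x', f', G', fun m hm => Function.update_of_ne hm _ _,
    fun m hm => Function.update_of_ne hm _ _, fun m hm => Function.update_of_ne hm _ _,
    ?_, ?_, ?_, ?_, ?_, ?_, ?_, ?_⟩
  · -- norms of x'
    intro m hm
    rcases Nat.lt_succ_iff_lt_or_eq.1 hm with hm | rfl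
    · rw [hx'lt m hm]; exact g1 m hm
    · rw [hx'n]; exact hξ1
  · -- norms of f'
    intro k hk
    rcases Nat.lt_succ_iff_lt_or_eq.1 hk with hk | rfl
    · rw [hf'lt k hk]; exact g2 k hk
    · rw [hf'n]; exact hφ1
  · -- F (f' k) = θ
    intro k hk
    exact hF' k (Nat.lt_succ_iff.1 hk)
  · -- f' k (x' m) = θ for k ≤ m
    intro k m hkm hm
    rcases Nat.lt_succ_iff_lt_or_eq.1 hm with hm | rfl
    · rw [hx'lt m hm, hf'lt k (lt_of_le_of_lt hkm hm)]
      exact g4 k m hkm hm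
    · rw [hx'n]
      rw [hξ2 (f' k) (hfS k hkm)]
      exact hF' k hkm
  · -- f' k (x' m) = 0 for m < k
    intro k m hmk hk
    rcases Nat.lt_succ_iff_lt_or_eq.1 hk with hk | rfl
    · rw [hx'lt m (lt_trans hmk hk), hf'lt k hk]
      exact g5 k m hmk hk
    · rw [hf'n, hx'lt m hmk]
      exact hximg _ (Finset.mem_image_of_mem x (Finset.mem_range.2 hmk))
  · -- g (x' m) = F g for g ∈ G' k, k ≤ m
    intro k m hkm hm g hg
    rcases Nat.lt_succ_iff_lt_or_eq.1 hm with hm | rfl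
    · rw [hx'lt m hm]
      rw [hG'lt k (lt_of_le_of_lt hkm hm)] at hg
      exact g6 k m hkm hm g hg
    · rw [hx'n]
      exact hξ2 g (hGS k hkm g hg)
  · -- norms of G'
    intro k hk g hg
    rcases Nat.lt_succ_iff_lt_or_eq.1 hk with hk | rfl
    · rw [hG'lt k hk] at hg; exact g7 k hk g hg
    · rw [hG'n] at hg; exact hΓ1 g hg
  · -- norming property
    intro k hk u hu
    have himg : x' '' Set.Iio k = x '' Set.Iio k := by
      apply Set.image_congr
      intro m hm
      exact hx'lt m (lt_of_lt_of_le hm (Nat.lt_succ_iff.1 hk))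
    rw [himg] at hu
    rcases Nat.lt_succ_iff_lt_or_eq.1 hk with hk | rfl
    · rw [hG'lt k hk]
      exact g8 k hk u hu
    · rw [hG'n]
      apply hΓ2
      rw [hspan_img]
      exact hu

lemma my_construction [CompleteSpace X]
    (h : ¬ Function.Surjective (inclusionInDoubleDual ℝ X))
    (F : StrongDual ℝ (StrongDual ℝ X)) (θ θ'' δ : ℝ) (hθ : 0 < θ) (hθθ : θ < θ'')
    (hF : ‖F‖ < 1) (hδ0 : 0 < δ)
    (hdist : ∀ x : X, θ'' ≤ ‖F - inclusionInDoubleDual ℝ X x‖) :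
    ∃ (x : ℕ → X) (f : ℕ → StrongDual ℝ X) (G : ℕ → Finset (StrongDual ℝ X)),
      (∀ m, ‖x m‖ = 1) ∧ (∀ k, ‖f k‖ ≤ 1) ∧
      (∀ k m, k ≤ m → f k (x m) = θ) ∧
      (∀ k m, m < k → f k (x m) = 0) ∧
      (∀ k m, k ≤ m → ∀ g ∈ G k, g (x m) = F g) ∧
      (∀ k, ∀ g ∈ G k, ‖g‖ ≤ 1) ∧
      (∀ k, ∀ u ∈ Submodule.span ℝ (x '' Set.Iio k), ∃ g ∈ G k, (1 - δ) * ‖u‖ ≤ g u) := by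
  classical
  choose xf ff Gf ha1 ha2 ha3 hgood using
    my_step h F θ θ'' δ hθ hθθ hF hδ0 hdist
  have good0 : GoodSeq F θ δ 0 (fun _ => 0) (fun _ => 0) (fun _ => ∅) :=
    ⟨fun m hm => absurd hm (Nat.not_lt_zero _), fun k hk => absurd hk (Nat.not_lt_zero _),
     fun k hk => absurd hk (Nat.not_lt_zero _),
     fun k m _ hm => absurd hm (Nat.not_lt_zero _),
     fun k m _ hk => absurd hk (Nat.not_lt_zero _),
     fun k m _ hm => absurd hm (Nat.not_lt_zero _),
     fun k hk => absurd hk (Nat.not_lt_zero _), fun k hk => absurd hk (Nat.not_lt_zero _)⟩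
  let D := (ℕ → X) × (ℕ → StrongDual ℝ X) × (ℕ → Finset (StrongDual ℝ X))
  let chain : ∀ n : ℕ, {d : D // GoodSeq F θ δ n d.1 d.2.1 d.2.2} := fun n =>
    Nat.rec ⟨⟨fun _ => 0, fun _ => 0, fun _ => ∅⟩, good0⟩
      (fun n p => ⟨⟨xf n p.1.1 p.1.2.1 p.1.2.2 p.2, ff n p.1.1 p.1.2.1 p.1.2.2 p.2,
        Gf n p.1.1 p.1.2.1 p.1.2.2 p.2⟩,
        hgood n p.1.1 p.1.2.1 p.1.2.2 p.2⟩) n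
  set x : ℕ → X := fun m => (chain (m+1)).1.1 m with hxdef
  set f : ℕ → StrongDual ℝ X := fun m => (chain (m+1)).1.2.1 m with hfdef
  set G : ℕ → Finset (StrongDual ℝ X) := fun m => (chain (m+1)).1.2.2 m with hGdef
  have agree : ∀ n m, m < n →
      (chain n).1.1 m = x m ∧ (chain n).1.2.1 m = f m ∧ (chain n).1.2.2 m = G m := by
    intro n
    induction n with
    | zero => exact fun m hm => absurd hm (Nat.not_lt_zero _)
    | succ n ih =>
      intro m hm
      rcases Nat.lt_succ_iff_lt_or_eq.1 hm with hm | rfl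
      · have e1 : (chain (n+1)).1.1 m = (chain n).1.1 m :=
          ha1 n (chain n).1.1 (chain n).1.2.1 (chain n).1.2.2 (chain n).2 m (Nat.ne_of_lt hm)
        have e2 : (chain (n+1)).1.2.1 m = (chain n).1.2.1 m :=
          ha2 n (chain n).1.1 (chain n).1.2.1 (chain n).1.2.2 (chain n).2 m (Nat.ne_of_lt hm)
        have e3 : (chain (n+1)).1.2.2 m = (chain n).1.2.2 m :=
          ha3 n (chain n).1.1 (chain n).1.2.1 (chain n).1.2.2 (chain n).2 m (Nat.ne_of_lt hm)
        obtain ⟨i1, i2, i3⟩ := ih m hm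
        exact ⟨e1.trans i1, e2.trans i2, e3.trans i3⟩
      · exact ⟨rfl, rfl, rfl⟩
  refine ⟨x, f, G, ?_, ?_, ?_, ?_, ?_, ?_, ?_⟩
  · intro m
    have := ((chain (m+1)).2).1 m (Nat.lt_succ_self m)
    rwa [(agree (m+1) m (Nat.lt_succ_self m)).1] at this
  · intro k
    have := ((chain (k+1)).2).2.1 k (Nat.lt_succ_self k)
    rwa [(agree (k+1) k (Nat.lt_succ_self k)).2.1] at this
  · intro k m hkm
    have := ((chain (m+1)).2).2.2.2.1 k m hkm (Nat.lt_succ_self m)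
    rwa [(agree (m+1) m (Nat.lt_succ_self m)).1,
      (agree (m+1) k (Nat.lt_succ_of_le hkm)).2.1] at this
  · intro k m hmk
    have := ((chain (k+1)).2).2.2.2.2.1 k m hmk (Nat.lt_succ_self k)
    rwa [(agree (k+1) m (Nat.lt_succ_of_le (le_of_lt hmk))).1,
      (agree (k+1) k (Nat.lt_succ_self k)).2.1] at this
  · intro k m hkm g hg
    have hGk : (chain (m+1)).1.2.2 k = G k := (agree (m+1) k (Nat.lt_succ_of_le hkm)).2.2
    have := ((chain (m+1)).2).2.2.2.2.2.1 k m hkm (Nat.lt_succ_self m) g (hGk ▸ hg)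
    rwa [(agree (m+1) m (Nat.lt_succ_self m)).1] at this
  · intro k g hg
    have hGk : (chain (k+1)).1.2.2 k = G k := (agree (k+1) k (Nat.lt_succ_self k)).2.2
    exact ((chain (k+1)).2).2.2.2.2.2.2.1 k (Nat.lt_succ_self k) g (hGk ▸ hg)
  · intro k u hu
    have himg : (chain (k+1)).1.1 '' Set.Iio k = x '' Set.Iio k := by
      apply Set.image_congr
      intro m hm
      exact (agree (k+1) m (Nat.lt_succ_of_le (le_of_lt hm))).1
    have hGk : (chain (k+1)).1.2.2 k = G k := (agree (k+1) k (Nat.lt_succ_self k)).2.2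
    have := ((chain (k+1)).2).2.2.2.2.2.2.2 k (Nat.lt_succ_self k) u (by rwa [himg])
    rwa [hGk] at this

set_option maxHeartbeats 1600000 in
/-- every non-reflexive Banach space contains, for every `ε > 0`,
a normalized `(1+ε)`-wide-(s) sequence. -/
theorem stmt_9 [CompleteSpace X] (h : ¬ Function.Surjective (inclusionInDoubleDual ℝ X))
    (ε : ℝ) (hε : 0 < ε) :
    ∃ b : ℕ → X, (∀ j, ‖b j‖ = 1) ∧ IsWideSWith (1 + ε) b := by
  classical
  -- the constants
  set θ : ℝ := (1 + ε)⁻¹ with hθdef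
  have hε1 : (0:ℝ) < 1 + ε := by linarith
  have hθpos : 0 < θ := by positivity
  have hθlt1 : θ < 1 := by
    rw [hθdef]
    rw [inv_lt_one_iff₀]
    right; linarith
  have hθinv : θ⁻¹ = 1 + ε := by rw [hθdef, inv_inv]
  have hθmul : θ * (1 + ε) = 1 := by rw [hθdef]; field_simp
  set θ' : ℝ := (1 + θ)/2 with hθ'def
  have hθ'pos : 0 < θ' := by rw [hθ'def]; linarith
  have hθθ' : θ < θ' := by rw [hθ'def]; linarith
  have hθ'lt1 : θ' < 1 := by rw [hθ'def]; linarith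
  set θ'' : ℝ := (θ + θ')/2 with hθ''def
  have hθθ'' : θ < θ'' := by rw [hθ''def]; linarith
  set η : ℝ := (1 - θ/θ')/2 with hηdef
  have hθθ'div : θ/θ' < 1 := (div_lt_one hθ'pos).2 hθθ'
  have hθθ'div0 : 0 < θ/θ' := by positivity
  have hηpos : 0 < η := by rw [hηdef]; linarith
  have hηlt1 : η < 1 := by rw [hηdef]; linarith
  have hfactor : (1 - η) * θ' = θ'' := by
    rw [hηdef, hθ''def]
    field_simp
    ring
  set δ : ℝ := ε / (2 + 2*ε) with hδdef
  have hδ0 : 0 < δ := by rw [hδdef]; positivity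
  have hδ1 : δ < 1 := by
    rw [hδdef, div_lt_one (by linarith)]
    linarith
  have hδkey : 2 + ε = 2 * (1 + ε) * (1 - δ) := by
    rw [hδdef]
    field_simp
    ring
  -- the bidual functional F
  set J := inclusionInDoubleDual ℝ X with hJdef
  set Xhat : Submodule ℝ (StrongDual ℝ (StrongDual ℝ X)) := LinearMap.range (J : X →ₗ[ℝ] StrongDual ℝ (StrongDual ℝ X)) with hXhatdef
  have hXhatmem : ∀ Φ, Φ ∈ Xhat ↔ ∃ u : X, J u = Φ := fun Φ => LinearMap.mem_range
  have hclosed : IsClosed (Xhat : Set (StrongDual ℝ (StrongDual ℝ X))) := by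
    have h1 : (Xhat : Set (StrongDual ℝ (StrongDual ℝ X))) = Set.range ⇑(inclusionInDoubleDualLi ℝ (E := X)) := by
      rw [hXhatdef]
      ext Φ
      simp only [SetLike.mem_coe, LinearMap.mem_range, Set.mem_range]
      rfl
    rw [h1]
    exact ((inclusionInDoubleDualLi ℝ (E := X)).isometry.isUniformInducing.isComplete_range).isClosed
  have hexist : ∃ Φ, Φ ∉ Xhat := by
    rw [Function.Surjective] at h
    push_neg at h
    obtain ⟨Φ, hΦ⟩ := h
    exact ⟨Φ, fun hmem => by
      obtain ⟨u, hu⟩ := (hXhatmem Φ).1 hmem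
      exact hΦ u hu⟩
  obtain ⟨x₀, hx₀mem, hx₀⟩ := my_riesz hclosed hexist hθ'lt1
  have hx₀ne : x₀ ≠ 0 := fun h0 => hx₀mem (h0 ▸ Submodule.zero_mem Xhat)
  have hx₀norm : (0:ℝ) < ‖x₀‖ :=
    lt_of_le_of_ne (norm_nonneg x₀)
      (fun h0 => hx₀ne ((ContinuousLinearMap.opNorm_zero_iff x₀).1 h0.symm))
  set cc : ℝ := (1 - η) * ‖x₀‖⁻¹ with hccdef
  have hccpos : 0 < cc := by
    rw [hccdef]
    exact mul_pos (by linarith) (inv_pos.2 hx₀norm)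
  set F : StrongDual ℝ (StrongDual ℝ X) := cc • x₀ with hFdef
  have hFnorm : ‖F‖ = 1 - η := by
    rw [hFdef, my_ns, Real.norm_eq_abs, abs_of_pos hccpos, hccdef]
    field_simp
  have hFlt1 : ‖F‖ < 1 := by rw [hFnorm]; linarith
  have hFle1 : ‖F‖ ≤ 1 := le_of_lt hFlt1
  have hdist : ∀ u : X, θ'' ≤ ‖F - J u‖ := by
    intro u
    have hmem : cc⁻¹ • (J u) ∈ Xhat := Submodule.smul_mem _ _ (LinearMap.mem_range_self _ u)
    have h1 : F - J u = cc • (x₀ - cc⁻¹ • (J u)) := by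
      rw [my_ss, smul_smul, mul_inv_cancel₀ (ne_of_gt hccpos), one_smul]
    rw [h1, my_ns, Real.norm_eq_abs, abs_of_pos hccpos]
    have h2 : θ' * ‖x₀‖ ≤ ‖x₀ - cc⁻¹ • (J u)‖ := hx₀ _ hmem
    calc θ'' = (1 - η) * θ' := hfactor.symm
      _ = cc * (θ' * ‖x₀‖) := by
          rw [hccdef]
          field_simp
      _ ≤ cc * ‖x₀ - cc⁻¹ • (J u)‖ := mul_le_mul_of_nonneg_left h2 (le_of_lt hccpos)
  obtain ⟨x, f, G, hx1, hf1, hfx, hfx0, hGx, hGnorm, hGspan⟩ :=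
    my_construction h F θ θ'' δ hθpos hθθ'' hFlt1 hδ0 hdist
  -- key computation
  have key : ∀ (c : ℕ → ℝ) (n k : ℕ), k ≤ n →
      f k (∑ j ∈ Finset.range n, c j • x j) = θ * ∑ j ∈ Finset.Ico k n, c j := by
    intro c n k hkn
    calc f k (∑ j ∈ Finset.range n, c j • x j) = ∑ j ∈ Finset.range n, c j * f k (x j) := by
          rw [map_sum]
          exact Finset.sum_congr rfl fun j _ => by rw [map_smul, smul_eq_mul]
      _ = ∑ j ∈ Finset.Ico 0 n, c j * f k (x j) := by rw [Finset.range_eq_Ico]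
      _ = ∑ j ∈ Finset.Ico 0 k, c j * f k (x j) + ∑ j ∈ Finset.Ico k n, c j * f k (x j) :=
          (Finset.sum_Ico_consecutive _ (Nat.zero_le k) hkn).symm
      _ = 0 + ∑ j ∈ Finset.Ico k n, c j * θ := by
          congr 1
          · apply Finset.sum_eq_zero
            intro j hj
            rw [hfx0 k j (Finset.mem_Ico.1 hj).2, mul_zero]
          · exact Finset.sum_congr rfl fun j hj => by rw [hfx k j (Finset.mem_Ico.1 hj).1]
      _ = θ * ∑ j ∈ Finset.Ico k n, c j := by rw [zero_add, ← Finset.sum_mul, mul_comm]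
  refine ⟨x, hx1, ?_, ?_, ?_⟩
  · -- basic with constant 2(1+ε)
    intro c k n hkn
    set H : X := ∑ j ∈ Finset.range k, c j • x j with hHdef
    set y : X := ∑ j ∈ Finset.range n, c j • x j with hydef
    have hH : H ∈ Submodule.span ℝ (x '' Set.Iio k) := by
      apply Submodule.sum_mem
      intro j hj
      exact Submodule.smul_mem _ _
        (Submodule.subset_span ⟨j, Finset.mem_range.1 hj, rfl⟩)
    obtain ⟨g, hgG, hgH⟩ := hGspan k H hH
    have hgnorm : ‖g‖ ≤ 1 := hGnorm k g hgG
    set s : ℝ := F g / θ with hsdef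
    have hsabs : |s| ≤ 1 + ε := by
      rw [hsdef, abs_div, abs_of_pos hθpos, div_le_iff₀ hθpos]
      have h2 : |F g| ≤ 1 := by
        calc |F g| ≤ ‖F‖ * ‖g‖ := F.le_opNorm g
          _ ≤ 1 * 1 := mul_le_mul hFle1 hgnorm (norm_nonneg _) zero_le_one
          _ = 1 := one_mul 1
      calc |F g| ≤ 1 := h2
        _ = (1 + ε) * θ := by rw [mul_comm, hθmul]
    set hfun : StrongDual ℝ X := g - s • f k with hfundef
    have hfunval : hfun y = g H := by
      have hgy : g y = g H + F g * ∑ j ∈ Finset.Ico k n, c j := by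
        calc g y = ∑ j ∈ Finset.range n, c j * g (x j) := by
              rw [hydef, map_sum]
              exact Finset.sum_congr rfl fun j _ => by rw [map_smul, smul_eq_mul]
          _ = ∑ j ∈ Finset.Ico 0 k, c j * g (x j) + ∑ j ∈ Finset.Ico k n, c j * g (x j) := by
              rw [Finset.range_eq_Ico, ← Finset.sum_Ico_consecutive _ (Nat.zero_le k) hkn]
          _ = g H + ∑ j ∈ Finset.Ico k n, c j * F g := by
              congr 1
              · rw [hHdef, map_sum, ← Finset.range_eq_Ico]
                exact (Finset.sum_congr rfl fun j _ => by rw [map_smul, smul_eq_mul]).symm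
              · exact Finset.sum_congr rfl fun j hj => by
                  rw [hGx k j (Finset.mem_Ico.1 hj).1 g hgG]
          _ = g H + F g * ∑ j ∈ Finset.Ico k n, c j := by rw [← Finset.sum_mul, mul_comm]
      have hfky : f k y = θ * ∑ j ∈ Finset.Ico k n, c j := key c n k hkn
      have h3 : hfun y = g y - s * f k y := by
        rw [hfundef]
        simp [ContinuousLinearMap.sub_apply, ContinuousLinearMap.smul_apply, smul_eq_mul]
      rw [h3, hgy, hfky, hsdef]
      field_simp
      ring
    have hfunnorm : ‖hfun‖ ≤ 2 + ε := by
      calc ‖hfun‖ ≤ ‖g‖ + ‖s • f k‖ := norm_sub_le _ _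
        _ = ‖g‖ + |s| * ‖f k‖ := by rw [norm_smul, Real.norm_eq_abs]
        _ ≤ 1 + (1 + ε) * 1 := by
            have := mul_le_mul hsabs (hf1 k) (norm_nonneg _) (by linarith)
            linarith
        _ = 2 + ε := by ring
    have hchain : (1 - δ) * ‖H‖ ≤ (2 + ε) * ‖y‖ := by
      calc (1 - δ) * ‖H‖ ≤ g H := hgH
        _ = hfun y := hfunval.symm
        _ ≤ |hfun y| := le_abs_self _
        _ ≤ ‖hfun‖ * ‖y‖ := hfun.le_opNorm y
        _ ≤ (2 + ε) * ‖y‖ := mul_le_mul_of_nonneg_right hfunnorm (norm_nonneg _)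
    rw [hδkey] at hchain
    nlinarith [norm_nonneg H, norm_nonneg y]
  · intro j
    rw [hx1 j]
    linarith
  · -- the summing condition
    intro c k n hkn
    have hfy := key c n k hkn
    have h1 : |f k (∑ j ∈ Finset.range n, c j • x j)| ≤ ‖∑ j ∈ Finset.range n, c j • x j‖ := by
      calc |f k (∑ j ∈ Finset.range n, c j • x j)|
          ≤ ‖f k‖ * ‖∑ j ∈ Finset.range n, c j • x j‖ := (f k).le_opNorm _
        _ ≤ 1 * ‖∑ j ∈ Finset.range n, c j • x j‖ :=
            mul_le_mul_of_nonneg_right (hf1 k) (norm_nonneg _)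
        _ = _ := one_mul _
    rw [hfy, abs_mul, abs_of_pos hθpos] at h1
    nlinarith [abs_nonneg (∑ j ∈ Finset.Ico k n, c j),
      norm_nonneg (∑ j ∈ Finset.range n, c j • x j)]
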